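/- The abstraction [𝕍]X := (𝕍 × X)/∼α of a nominal set X, with the action π·⟨v⟩x := ⟨π(v)⟩(π·x), is a well-defined nominal set: the action respects α-equivalence classes and every class ⟨v⟩x is finitely supported, with supp(⟨v⟩x) = supp(x) ∖ {v}. -/

import Mathlib

open Pointwise

/-- The subgroup of finite permutations of the atoms `ℕ`. -/
def FinPerm : Subgroup (Equiv.Perm ℕ) where
  carrier := {π | {v | π v ≠ v}.Finite}
  one_mem' := by simp
  mul_mem' := by
    intro a b ha hb
    refine (ha.union hb).subset ?_
    intro v hv
    simp only [Set.mem_setOf_eq, Equiv.Perm.mul_apply] at hv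
    by_contra h
    simp only [Set.mem_union, Set.mem_setOf_eq, not_or, not_not] at h
    rw [h.2] at hv
    exact hv h.1
  inv_mem' := by
    intro a ha
    refine ha.subset ?_
    intro v hv
    simp only [Set.mem_setOf_eq] at hv ⊢
    intro h
    exact hv (by conv_lhs => rw [← h, Equiv.Perm.inv_def, Equiv.symm_apply_apply])


/-- Equivariant maps between `FinPerm`-sets. -/
def Equivariant {X Y : Type*} [MulAction FinPerm X] [MulAction FinPerm Y] (f : X → Y) : Prop :=
  ∀ (π : FinPerm) (x : X), f (π • x) = π • f x

/-- A finite set of atoms supports an element. -/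
def Supports {X : Type*} [MulAction FinPerm X] (S : Finset ℕ) (x : X) : Prop :=
  ∀ π : FinPerm, (∀ v ∈ S, π • v = v) → π • x = x

/-- A nominal set: a `FinPerm`-set with a least finite support function. -/
class NominalSet (X : Type*) [MulAction FinPerm X] where
  supp : X → Finset ℕ
  supports_supp : ∀ x : X, Supports (supp x) x
  supp_least : ∀ (x : X) (S : Finset ℕ), Supports S x → supp x ⊆ S

open NominalSet

/-- The transposition `(a b)` as a finite permutation. -/
def swapPerm (a b : ℕ) : FinPerm :=
  ⟨Equiv.swap a b, by
    show {v | Equiv.swap a b v ≠ v}.Finite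
    refine ((Set.finite_singleton b).insert a).subset ?_
    intro v hv
    simp only [Set.mem_setOf_eq] at hv
    by_contra h
    simp only [Set.mem_insert_iff, Set.mem_singleton_iff, not_or] at h
    exact hv (Equiv.swap_apply_of_ne_of_ne h.1 h.2)⟩

/-- α-equivalence on `ℕ × X`: `(v₁,x₁) ∼α (v₂,x₂)` iff some `z` fresh for `v₁, v₂, x₁, x₂`
satisfies `(v₁ z)·x₁ = (v₂ z)·x₂`. -/
def alphaEq {X : Type*} [MulAction FinPerm X] [NominalSet X] (p q : ℕ × X) : Prop :=
  ∃ z : ℕ, z ≠ p.1 ∧ z ≠ q.1 ∧ z ∉ supp p.2 ∧ z ∉ supp q.2 ∧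
    swapPerm p.1 z • p.2 = swapPerm q.1 z • q.2

/-- A finite set `S` of atoms supports the abstraction `⟨v⟩x` (represented by the pair
`(v, x)`) if every permutation fixing `S` pointwise maps `(v,x)` to an α-equivalent pair. -/
def SupportsAbs {X : Type*} [MulAction FinPerm X] [NominalSet X]
    (S : Finset ℕ) (p : ℕ × X) : Prop :=
  ∀ π : FinPerm, (∀ v ∈ S, π • v = v) → alphaEq (π • p.1, π • p.2) p

lemma finPerm_smul_def (π : FinPerm) (v : ℕ) : π • v = (π : Equiv.Perm ℕ) v := rfl

@[simp] lemma swapPerm_coe (a b : ℕ) : (swapPerm a b : Equiv.Perm ℕ) = Equiv.swap a b := rfl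

@[simp] lemma swapPerm_smul (a b v : ℕ) : swapPerm a b • v = Equiv.swap a b v := rfl

lemma swapPerm_mul_self (a b : ℕ) : swapPerm a b * swapPerm a b = 1 := by
  ext v
  simp

lemma swapPerm_smul_swapPerm_smul {α : Type*} [MulAction FinPerm α] (a b : ℕ) (x : α) :
    swapPerm a b • swapPerm a b • x = x := by
  rw [← mul_smul, swapPerm_mul_self, one_smul]

lemma swapPerm_smul_smul {α : Type*} [MulAction FinPerm α] (π : FinPerm) (a b : ℕ) (x : α) :
    swapPerm (π • a) (π • b) • π • x = π • swapPerm a b • x := by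
  have hconj : swapPerm (π • a) (π • b) = π * swapPerm a b * π⁻¹ := by
    ext v
    simp only [swapPerm_coe, finPerm_smul_def, Equiv.swap_apply_apply]
    rfl
  rw [hconj, mul_smul, mul_smul, inv_smul_smul]

section Support

variable {X : Type*} [MulAction FinPerm X]

lemma Supports.smul {S : Finset ℕ} {x : X} (h : Supports S x) (π : FinPerm) :
    Supports (π • S) (π • x) := by
  intro σ hσ
  have hconj : (π⁻¹ * σ * π) • x = x := by
    refine h _ fun v hv => ?_
    rw [mul_smul, mul_smul, hσ _ (Finset.smul_mem_smul_finset hv), inv_smul_smul]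
  rw [mul_smul, mul_smul, inv_smul_eq_iff] at hconj
  exact hconj

variable [NominalSet X]

lemma supp_smul (π : FinPerm) (x : X) : supp (π • x) = π • supp x := by
  refine subset_antisymm (supp_least _ _ ((supports_supp x).smul π)) ?_
  have h := (supports_supp (π • x)).smul π⁻¹
  rw [inv_smul_smul] at h
  rw [Finset.smul_finset_subset_iff]
  exact supp_least _ _ h

lemma smul_mem_supp_smul_iff (π : FinPerm) (x : X) (a : ℕ) :
    π • a ∈ supp (π • x) ↔ a ∈ supp x := by
  rw [supp_smul, Finset.smul_mem_smul_finset_iff]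

end Support

section Abstraction

variable {X : Type*} [MulAction FinPerm X] [NominalSet X]

/-- If `z` witnesses `p ∼α q`, then `π • z` witnesses `π • p ∼α π • q`. -/
lemma alphaEq.smul {p q : ℕ × X} (h : alphaEq p q) (π : FinPerm) :
    alphaEq (π • p.1, π • p.2) (π • q.1, π • q.2) := by
  obtain ⟨z, hz₁, hz₂, hzx₁, hzx₂, hswap⟩ := h
  refine ⟨π • z, ?_, ?_, ?_, ?_, ?_⟩
  · exact (MulAction.injective π).ne hz₁
  · exact (MulAction.injective π).ne hz₂
  · rwa [smul_mem_supp_smul_iff]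
  · rwa [smul_mem_supp_smul_iff]
  · simp only [swapPerm_smul_smul, hswap]

lemma eq_of_alphaEq_of_fst_eq {v : ℕ} {x y : X} (h : alphaEq (v, x) (v, y)) : x = y := by
  obtain ⟨z, -, -, -, -, hswap⟩ := h
  simpa only [swapPerm_smul_swapPerm_smul] using congrArg (swapPerm v z • ·) hswap

/-- For `z` fresh, `(v z) (π v z) π` fixes `supp x` pointwise whenever `π` fixes
`supp x \ {v}`, so `(π v z) • π • x = (v z) • x`. -/
lemma supportsAbs_supp_sdiff (v : ℕ) (x : X) : SupportsAbs (supp x \ {v}) (v, x) := by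
  intro π hπ
  obtain ⟨z, hz⟩ := Infinite.exists_notMem_finset (supp x ∪ supp (π • x) ∪ {v, π • v})
  simp only [Finset.mem_union, Finset.mem_insert, Finset.mem_singleton, not_or] at hz
  obtain ⟨⟨hzx, hzπx⟩, hzv, hzπv⟩ := hz
  refine ⟨z, hzπv, hzv, hzπx, hzx, ?_⟩
  have hfix : ∀ w ∈ supp x, (swapPerm v z * swapPerm (π • v) z * π) • w = w := by
    intro w hw
    have hwz : w ≠ z := by rintro rfl; exact hzx hw
    rw [mul_smul, mul_smul]
    by_cases hwv : w = v
    · subst hwv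
      simp
    · have hπw : π • w = w := hπ w (by simp [hw, hwv])
      have hwπv : w ≠ π • v := fun h => hwv (MulAction.injective π (hπw.trans h))
      rw [hπw, swapPerm_smul, swapPerm_smul, Equiv.swap_apply_of_ne_of_ne hwπv hwz,
        Equiv.swap_apply_of_ne_of_ne hwv hwz]
  have hx := supports_supp x _ hfix
  rw [mul_smul, mul_smul] at hx
  calc swapPerm (π • v) z • π • x
      = swapPerm v z • swapPerm v z • swapPerm (π • v) z • π • x :=
        (swapPerm_smul_swapPerm_smul v z _).symm
    _ = swapPerm v z • x := by rw [hx]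

/-- If `a ∈ supp x \ {v}` were outside a support `S` of `⟨v⟩x`, a transposition `(a b)` with
`b` fresh would fix `⟨v⟩x`, hence `x`, and move `a ∈ supp x` to `b ∉ supp x`. -/
lemma supp_sdiff_subset_of_supportsAbs {v : ℕ} {x : X} {S : Finset ℕ}
    (hS : SupportsAbs S (v, x)) : supp x \ {v} ⊆ S := by
  intro a ha
  rw [Finset.mem_sdiff, Finset.mem_singleton] at ha
  obtain ⟨hax, hav⟩ := ha
  by_contra haS
  obtain ⟨b, hb⟩ := Infinite.exists_notMem_finset (supp x ∪ S ∪ {v})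
  simp only [Finset.mem_union, Finset.mem_singleton, not_or] at hb
  obtain ⟨⟨hbx, hbS⟩, hbv⟩ := hb
  have hfixS : ∀ w ∈ S, swapPerm a b • w = w := by
    intro w hw
    exact Equiv.swap_apply_of_ne_of_ne (by rintro rfl; exact haS hw) (by rintro rfl; exact hbS hw)
  have hfixv : swapPerm a b • v = v := Equiv.swap_apply_of_ne_of_ne (Ne.symm hav) (Ne.symm hbv)
  have hα := hS _ hfixS
  rw [hfixv] at hα
  have hfixx : swapPerm a b • x = x := eq_of_alphaEq_of_fst_eq hα
  apply hbx
  rw [← smul_mem_supp_smul_iff (swapPerm a b), hfixx] at hax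
  simpa using hax

end Abstraction

/-- The abstraction `[𝕍]X = (ℕ × X)/∼α` with action `π·⟨v⟩x = ⟨π v⟩(π·x)` is a
well-defined nominal set: the action respects α-classes, and the least support of the
class `⟨v⟩x` is `supp x \ {v}`. -/
theorem abstraction_nominal {X : Type*} [MulAction FinPerm X] [NominalSet X] :
    (∀ (π : FinPerm) (p q : ℕ × X), alphaEq p q →
        alphaEq (π • p.1, π • p.2) (π • q.1, π • q.2)) ∧
    (∀ (v : ℕ) (x : X),
        SupportsAbs (supp x \ {v}) (v, x) ∧
        ∀ S : Finset ℕ, SupportsAbs S (v, x) → supp x \ {v} ⊆ S) :=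
  ⟨fun π _ _ h => h.smul π,
    fun v x => ⟨supportsAbs_supp_sdiff v x, fun _ => supp_sdiff_subset_of_supportsAbs⟩⟩
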